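/- Let ε ∈ (0,1), and let L and L_s be N×N real symmetric positive semidefinite matrices (the symmetric normalized Laplacians of the full graph and of a spectrally sparsified graph) satisfying the spectral sparsification guarantee (1−ε)·xᵀLx ≤ xᵀL_s x ≤ (1+ε)·xᵀLx for all x ∈ ℝ^N. Let σ : ℝ → ℝ be 1-Lipschitz (e.g. the ReLU or ELU function), applied entrywise to matrices, let H ∈ ℝ^{N×D} and W ∈ ℝ^{D×F}, and define the GCN layer outputs Ĥ_f = σ((I − L)·H·W) and Ĥ_s = σ((I − L_s)·H·W) (entrywise application of σ). Then ‖Ĥ_f − Ĥ_s‖_F ≤ 4ε·‖L‖₂·‖H·W‖_F. -/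

import Mathlib

/-!
Write `E = L_s - L`. The sparsification inequalities say `|xᵀ E x| ≤ ε · xᵀ L x ≤ ε ‖L‖₂ ‖x‖²`,
and since `E` is symmetric its spectral norm is the supremum of its Rayleigh quotient, so
`‖E‖₂ ≤ ε ‖L‖₂`. The two layer outputs differ before activation by `E · H W`, whose Frobenius
norm is at most `‖E‖₂ ‖H W‖_F` (apply `E` column by column), and a 1-Lipschitz activation applied
entrywise does not increase the Frobenius norm of a difference.
-/

open Matrix

/-- Spectral norm: the operator norm induced by the Euclidean vector norm. -/
noncomputable def matSpectralNorm {m n : ℕ} (A : Matrix (Fin m) (Fin n) ℝ) : ℝ :=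
  ‖LinearMap.toContinuousLinearMap (Matrix.toEuclideanLin A)‖

/-- Frobenius norm: square root of the sum of squares of all entries. -/
noncomputable def frobeniusNorm {m n : ℕ} (A : Matrix (Fin m) (Fin n) ℝ) : ℝ :=
  Real.sqrt (∑ i, ∑ j, (A i j) ^ 2)

theorem ContinuousLinearMap.norm_le_of_abs_re_inner_self_le {𝕜 E : Type*} [RCLike 𝕜]
    [NormedAddCommGroup E] [InnerProductSpace 𝕜 E] {T : E →L[𝕜] E} (hT : T.IsSymmetric)
    {c : ℝ} (hc : 0 ≤ c) (h : ∀ x, |RCLike.re (inner 𝕜 (T x) x)| ≤ c * ‖x‖ ^ 2) :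
    ‖T‖ ≤ c := by
  rw [T.norm_eq_iSup_rayleighQuotient hT]
  refine ciSup_le fun x => ?_
  rcases eq_or_ne x 0 with rfl | hx
  · simpa using hc
  · rw [rayleighQuotient, reApplyInnerSelf_apply, abs_div, abs_sq, div_le_iff₀ (by positivity)]
    exact h x

lemma EuclideanSpace.norm_toLp_sq {n : Type*} [Fintype n] (x : n → ℝ) :
    ‖WithLp.toLp 2 x‖ ^ 2 = x ⬝ᵥ x := by
  rw [← real_inner_self_eq_norm_sq, EuclideanSpace.inner_toLp_toLp, star_trivial]

section Frobenius

variable {m n : ℕ}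

lemma frobeniusNorm_nonneg (A : Matrix (Fin m) (Fin n) ℝ) : 0 ≤ frobeniusNorm A :=
  Real.sqrt_nonneg _

lemma frobeniusNorm_le_of_abs_le {A B : Matrix (Fin m) (Fin n) ℝ}
    (h : ∀ i j, |A i j| ≤ |B i j|) : frobeniusNorm A ≤ frobeniusNorm B :=
  Real.sqrt_le_sqrt <| Finset.sum_le_sum fun i _ => Finset.sum_le_sum fun j _ =>
    sq_le_sq.mpr (h i j)

lemma frobeniusNorm_map_sub_map_le {σ : ℝ → ℝ} (hσ : LipschitzWith 1 σ)
    (A B : Matrix (Fin m) (Fin n) ℝ) :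
    frobeniusNorm (A.map σ - B.map σ) ≤ frobeniusNorm (A - B) :=
  frobeniusNorm_le_of_abs_le fun i j => by
    simpa [Real.dist_eq] using hσ.dist_le_mul (A i j) (B i j)

end Frobenius

section Spectral

variable {m n : ℕ}

lemma matSpectralNorm_nonneg (A : Matrix (Fin m) (Fin n) ℝ) : 0 ≤ matSpectralNorm A :=
  norm_nonneg _

open scoped Matrix.Norms.L2Operator in
lemma sum_mulVec_sq_le (A : Matrix (Fin m) (Fin n) ℝ) (v : Fin n → ℝ) :
    ∑ i, (A *ᵥ v) i ^ 2 ≤ matSpectralNorm A ^ 2 * ∑ i, v i ^ 2 := by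
  have h := pow_le_pow_left₀ (norm_nonneg _) (A.l2_opNorm_mulVec (WithLp.toLp 2 v)) 2
  rw [mul_pow, EuclideanSpace.norm_sq_eq, EuclideanSpace.norm_sq_eq] at h
  change _ ≤ ‖A‖ ^ 2 * _
  simpa using h

lemma frobeniusNorm_mul_le {k : ℕ} (A : Matrix (Fin m) (Fin n) ℝ)
    (C : Matrix (Fin n) (Fin k) ℝ) :
    frobeniusNorm (A * C) ≤ matSpectralNorm A * frobeniusNorm C := by
  have hcol (j : Fin k) : ∑ i, (A * C) i j ^ 2 ≤ matSpectralNorm A ^ 2 * ∑ i, C i j ^ 2 :=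
    sum_mulVec_sq_le A fun i => C i j
  rw [frobeniusNorm, frobeniusNorm, ← Real.sqrt_sq (matSpectralNorm_nonneg A),
    ← Real.sqrt_mul (sq_nonneg _), Finset.sum_comm, Finset.sum_comm (f := fun i j => C i j ^ 2),
    Finset.mul_sum]
  exact Real.sqrt_le_sqrt (Finset.sum_le_sum fun j _ => hcol j)

lemma matSpectralNorm_eq_norm_toEuclideanCLM (A : Matrix (Fin n) (Fin n) ℝ) :
    matSpectralNorm A = ‖toEuclideanCLM (𝕜 := ℝ) A‖ :=
  rfl

lemma dotProduct_mulVec_self_le (A : Matrix (Fin n) (Fin n) ℝ) (x : Fin n → ℝ) :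
    x ⬝ᵥ A *ᵥ x ≤ matSpectralNorm A * (x ⬝ᵥ x) := by
  set T := toEuclideanCLM (𝕜 := ℝ) A
  rw [← inner_toEuclideanCLM, ← EuclideanSpace.norm_toLp_sq,
    matSpectralNorm_eq_norm_toEuclideanCLM]
  calc _ ≤ ‖WithLp.toLp 2 x‖ * ‖T (WithLp.toLp 2 x)‖ := real_inner_le_norm _ _
    _ ≤ ‖WithLp.toLp 2 x‖ * (‖T‖ * ‖WithLp.toLp 2 x‖) := by gcongr; exact T.le_opNorm _
    _ = _ := by ring

lemma Matrix.IsHermitian.matSpectralNorm_le {A : Matrix (Fin n) (Fin n) ℝ} (hA : A.IsHermitian)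
    {c : ℝ} (hc : 0 ≤ c) (h : ∀ x, |x ⬝ᵥ A *ᵥ x| ≤ c * (x ⬝ᵥ x)) :
    matSpectralNorm A ≤ c := by
  rw [matSpectralNorm_eq_norm_toEuclideanCLM]
  refine ContinuousLinearMap.norm_le_of_abs_re_inner_self_le
    (isSymmetric_toEuclideanLin_iff.mpr hA) hc fun x => ?_
  rw [RCLike.re_to_real, real_inner_comm, inner_toEuclideanCLM, ← WithLp.toLp_ofLp (p := 2) x,
    EuclideanSpace.norm_toLp_sq]
  exact h _

end Spectral

def IsSpectralApprox {n : Type*} [Fintype n] (ε : ℝ) (L Ls : Matrix n n ℝ) : Prop :=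
  ∀ x : n → ℝ,
    (1 - ε) * (x ⬝ᵥ (L *ᵥ x)) ≤ x ⬝ᵥ (Ls *ᵥ x) ∧ x ⬝ᵥ (Ls *ᵥ x) ≤ (1 + ε) * (x ⬝ᵥ (L *ᵥ x))

lemma IsSpectralApprox.abs_dotProduct_sub_mulVec_self_le {n : Type*} [Fintype n] {ε : ℝ}
    {L Ls : Matrix n n ℝ} (h : IsSpectralApprox ε L Ls) (x : n → ℝ) :
    |x ⬝ᵥ (Ls - L) *ᵥ x| ≤ ε * (x ⬝ᵥ L *ᵥ x) := by
  rw [sub_mulVec, dotProduct_sub, abs_sub_le_iff]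
  constructor <;> linarith [h x]

lemma IsSpectralApprox.matSpectralNorm_sub_le {n : ℕ} {ε : ℝ} {L Ls : Matrix (Fin n) (Fin n) ℝ}
    (h : IsSpectralApprox ε L Ls) (hε : 0 ≤ ε) (hL : L.IsHermitian) (hLs : Ls.IsHermitian) :
    matSpectralNorm (Ls - L) ≤ ε * matSpectralNorm L :=
  (hLs.sub hL).matSpectralNorm_le (mul_nonneg hε (matSpectralNorm_nonneg L)) fun x =>
    calc |x ⬝ᵥ (Ls - L) *ᵥ x| ≤ ε * (x ⬝ᵥ L *ᵥ x) := h.abs_dotProduct_sub_mulVec_self_le x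
      _ ≤ ε * (matSpectralNorm L * (x ⬝ᵥ x)) := by gcongr; exact dotProduct_mulVec_self_le L x
      _ = ε * matSpectralNorm L * (x ⬝ᵥ x) := by ring

/-- **Theorem 1 (GCN layer is preserved by spectral sparsification).**
If `L` and `Ls` are symmetric PSD matrices with
`(1-ε)·xᵀLx ≤ xᵀLsx ≤ (1+ε)·xᵀLx` for all `x`, `σ` is 1-Lipschitz (applied entrywise),
and the GCN layer outputs are `σ((I − L)·H·W)` resp. `σ((I − Ls)·H·W)`, then
`‖Ĥ_f − Ĥ_s‖_F ≤ 4ε·‖L‖₂·‖H·W‖_F`. -/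
theorem gcn_layer_spectral_sparsification
    {N D F : ℕ} (ε : ℝ) (hε : ε ∈ Set.Ioo (0 : ℝ) 1)
    (L Ls : Matrix (Fin N) (Fin N) ℝ)
    (hL : L.PosSemidef) (hLs : Ls.PosSemidef)
    (hsparse : ∀ x : Fin N → ℝ,
      (1 - ε) * (x ⬝ᵥ (L *ᵥ x)) ≤ x ⬝ᵥ (Ls *ᵥ x) ∧
      x ⬝ᵥ (Ls *ᵥ x) ≤ (1 + ε) * (x ⬝ᵥ (L *ᵥ x)))
    (σ : ℝ → ℝ) (hσ : LipschitzWith 1 σ)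
    (H : Matrix (Fin N) (Fin D) ℝ) (W : Matrix (Fin D) (Fin F) ℝ)
    (Hf Hs : Matrix (Fin N) (Fin F) ℝ)
    (hHf : Hf = (((1 : Matrix (Fin N) (Fin N) ℝ) - L) * H * W).map σ)
    (hHs : Hs = (((1 : Matrix (Fin N) (Fin N) ℝ) - Ls) * H * W).map σ) :
    frobeniusNorm (Hf - Hs) ≤ 4 * ε * matSpectralNorm L * frobeniusNorm (H * W) := by
  have hpre : (1 - L) * H * W - (1 - Ls) * H * W = (Ls - L) * (H * W) := by
    simp only [Matrix.sub_mul, Matrix.one_mul, Matrix.mul_assoc]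
    abel
  have hnorm : matSpectralNorm (Ls - L) ≤ ε * matSpectralNorm L :=
    IsSpectralApprox.matSpectralNorm_sub_le hsparse hε.1.le hL.isHermitian hLs.isHermitian
  have hHW := frobeniusNorm_nonneg (H * W)
  have hLn := matSpectralNorm_nonneg L
  subst hHf hHs
  calc _ ≤ frobeniusNorm ((1 - L) * H * W - (1 - Ls) * H * W) :=
        frobeniusNorm_map_sub_map_le hσ _ _
    _ = frobeniusNorm ((Ls - L) * (H * W)) := by rw [hpre]
    _ ≤ matSpectralNorm (Ls - L) * frobeniusNorm (H * W) := frobeniusNorm_mul_le _ _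
    _ ≤ ε * matSpectralNorm L * frobeniusNorm (H * W) := by gcongr
    _ ≤ 4 * ε * matSpectralNorm L * frobeniusNorm (H * W) := by
        gcongr
        linarith [hε.1]
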